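/- Let Γ be a dense additive subgroup of ℝ and let ε₁, ε₂ ∈ ℝ \ Γ. For α, β ∈ Γ with α, β ≥ 0 and γ, δ ∈ Γ with γ, δ > 0: there exists μ ∈ Γ with α ≤ ε₁ + μ < α + γ and β ≤ ε₂ − μ < β + δ if and only if α + β < ε₁ + ε₂ < (α + γ) + (β + δ). -/

import Mathlib

/-! Both conditions constrain `μ` alone: `μ ∈ [α - ε₁, α + γ - ε₁) ∩ (ε₂ - β - δ, ε₂ - β]`.
The endpoint `α - ε₁` is never attained by `μ ∈ Γ`, because `ε₁ + μ ∉ Γ`; this gives the strict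
lower inequality. Conversely the inequalities say that the open intervals
`(α - ε₁, α + γ - ε₁)` and `(ε₂ - β - δ, ε₂ - β)` meet, and a dense `Γ` has a point in the
intersection. -/

open Set

theorem Dense.exists_mem_Ioo_inter_Ioo {X : Type*} [TopologicalSpace X] [LinearOrder X]
    [OrderClosedTopology X] [DenselyOrdered X] {s : Set X} (hs : Dense s) {a b c d : X}
    (hab : a < b) (hcd : c < d) (had : a < d) (hcb : c < b) :
    ∃ x ∈ s, x ∈ Ioo a b ∧ x ∈ Ioo c d := by
  obtain ⟨x, hxs, hx⟩ := hs.exists_between (max_lt (lt_min hab had) (lt_min hcb hcd))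
  rw [← Ioo_inter_Ioo] at hx
  exact ⟨x, hxs, hx⟩

theorem dense_subgroup_shift_iff_irrational_two_general
    (Γ : AddSubgroup ℝ) (hΓ : Dense (Γ : Set ℝ))
    (α β γ δ ε₁ ε₂ : ℝ)
    (hα : α ∈ Γ)
    (hε₁ : ε₁ ∉ Γ)
    (hγ0 : 0 < γ) (hδ0 : 0 < δ) :
    (∃ μ ∈ Γ, (α ≤ ε₁ + μ ∧ ε₁ + μ < α + γ) ∧ (β ≤ ε₂ - μ ∧ ε₂ - μ < β + δ)) ↔
      (α + β < ε₁ + ε₂ ∧ ε₁ + ε₂ < (α + γ) + (β + δ)) := by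
  constructor
  · rintro ⟨μ, hμ, ⟨hlow₁, hup₁⟩, hlow₂, hup₂⟩
    have hstrict : α < ε₁ + μ :=
      hlow₁.lt_of_ne (ne_of_mem_of_not_mem hα (by rwa [Γ.add_mem_cancel_right hμ]))
    constructor <;> linarith
  · rintro ⟨hlow, hup⟩
    obtain ⟨μ, hμ, ⟨hlow₁, hup₁⟩, hlow₂, hup₂⟩ :=
      hΓ.exists_mem_Ioo_inter_Ioo (a := α - ε₁) (b := α + γ - ε₁) (c := ε₂ - β - δ)
        (d := ε₂ - β) (by linarith) (by linarith) (by linarith) (by linarith)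
    exact ⟨μ, hμ, ⟨by linarith, by linarith⟩, by linarith, by linarith⟩

/-- Let `Γ` be a dense additive subgroup of `ℝ`, `α, β ∈ Γ` nonnegative,
`γ, δ ∈ Γ` positive, and `ε₁, ε₂ ∈ ℝ \ Γ`. Then there exists `μ ∈ Γ` with
`α ≤ ε₁ + μ < α + γ` and `β ≤ ε₂ - μ < β + δ` if and only if
`α + β < ε₁ + ε₂ < (α + γ) + (β + δ)`. -/
theorem dense_subgroup_shift_iff_irrational_two
    (Γ : AddSubgroup ℝ) (hΓ : Dense (Γ : Set ℝ))
    (α β γ δ ε₁ ε₂ : ℝ)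
    (hα : α ∈ Γ) (hβ : β ∈ Γ) (hγ : γ ∈ Γ) (hδ : δ ∈ Γ)
    (hε₁ : ε₁ ∉ Γ) (hε₂ : ε₂ ∉ Γ)
    (hα0 : 0 ≤ α) (hβ0 : 0 ≤ β) (hγ0 : 0 < γ) (hδ0 : 0 < δ) :
    (∃ μ ∈ Γ, (α ≤ ε₁ + μ ∧ ε₁ + μ < α + γ) ∧ (β ≤ ε₂ - μ ∧ ε₂ - μ < β + δ)) ↔
      (α + β < ε₁ + ε₂ ∧ ε₁ + ε₂ < (α + γ) + (β + δ)) :=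
  dense_subgroup_shift_iff_irrational_two_general Γ hΓ α β γ δ ε₁ ε₂ hα hε₁ hγ0 hδ0
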